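/- For every n ≥ 1, the barycentric subdivision S(P) of the Z₂-crown P of order n, equipped with the involution C ↦ ν(C), is a Z₂-poset order-isomorphic to the Z₂-crown of order 2n via an isomorphism commuting with the involutions. -/

import Mathlib

/-! ### The poset `Q₁` (face poset of the 1-dimensional cross-polytope) -/

/-- The four elements `+0, -0, +1, -1` of `Q₁`. -/
inductive Q1 : Type
  | p0 | m0 | p1 | m1
deriving DecidableEq

instance instFintypeQ1 : Fintype Q1 :=
  ⟨{.p0, .m0, .p1, .m1}, fun x => by cases x <;> simp⟩

/-- The level (`false` for `±0`, `true` for `±1`) of an element of `Q₁`. -/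
def Q1.lvl : Q1 → Bool
  | .p0 => false | .m0 => false | .p1 => true | .m1 => true

/-- The order on `Q₁`: `±0 < ±1` (all four strict relations). -/
instance : PartialOrder Q1 where
  le x y := x = y ∨ (x.lvl = false ∧ y.lvl = true)
  le_refl x := Or.inl rfl
  le_trans x y z hxy hyz := by
    rcases hxy with rfl | ⟨h1, h2⟩
    · exact hyz
    rcases hyz with rfl | ⟨h3, h4⟩
    · exact Or.inr ⟨h1, h2⟩
    · rw [h2] at h3; exact absurd h3 (by simp)
  le_antisymm x y hxy hyx := by
    rcases hxy with rfl | ⟨h1, h2⟩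
    · rfl
    rcases hyx with rfl | ⟨h3, h4⟩
    · rfl
    · rw [h2] at h3; exact absurd h3 (by simp)

/-- The involution of `Q₁`, swapping `+x` and `-x`. -/
def q1inv : Q1 → Q1
  | .p0 => .m0 | .m0 => .p0 | .p1 => .m1 | .m1 => .p1

/-! ### The `Z₂`-crown of order `n` -/

/-- The `Z₂`-crown of order `n` has element set `ZMod (4n)`. -/
abbrev Crown (n : ℕ) : Type := ZMod (4 * n)

instance (n : ℕ) [NeZero n] : NeZero (4 * n) := ⟨by have := NeZero.ne n; omega⟩

private lemma crown_parity {n : ℕ} [NeZero n] (x : ZMod (4 * n)) :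
    (x + 1).val % 2 = (x.val + 1) % 2 := by
  haveI : Fact (1 < 4 * n) := ⟨by have := NeZero.ne n; omega⟩
  rw [ZMod.val_add, ZMod.val_one, Nat.mod_mod_of_dvd _ ⟨2 * n, by ring⟩]

/-- The order on the crown, generated by `e < e + 1` and `e < e - 1` for even `e`. -/
instance crownPO (n : ℕ) [NeZero n] : PartialOrder (Crown n) where
  le x y := x = y ∨ (Even x.val ∧ (y = x + 1 ∨ y = x - 1))
  le_refl x := Or.inl rfl
  le_trans x y z hxy hyz := by
    rcases hxy with rfl | ⟨hex, hy⟩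
    · exact hyz
    rcases hyz with rfl | ⟨hey, hz⟩
    · exact Or.inr ⟨hex, hy⟩
    · exfalso
      rcases hy with rfl | rfl
      · have h := crown_parity x
        rw [Nat.even_iff] at hex hey; omega
      · have e : x - 1 + 1 = x := by ring
        have h := crown_parity (x - 1)
        rw [e] at h
        rw [Nat.even_iff] at hex hey; omega
  le_antisymm x y hxy hyx := by
    rcases hxy with rfl | ⟨hex, hy⟩
    · rfl
    rcases hyx with rfl | ⟨hey, hx⟩
    · rfl
    · exfalso
      rcases hy with rfl | rfl
      · have h := crown_parity x
        rw [Nat.even_iff] at hex hey; omega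
      · have e : x - 1 + 1 = x := by ring
        have h := crown_parity (x - 1)
        rw [e] at h
        rw [Nat.even_iff] at hex hey; omega

/-! ### The vector space `ZMod2^{P²}` with its strict order indicator -/

/-- Ordered pairs `(x,y)` with `x ≤ y` of a poset: the basis of `ZMod2^{P²}`. -/
abbrev OPairs (P : Type) [PartialOrder P] : Type := {p : P × P // p.1 ≤ p.2}

/-- The `ZMod 2`-vector space with basis the ordered pairs of `P`. -/
abbrev VS (P : Type) [PartialOrder P] := OPairs P →₀ ZMod 2

open scoped Classical in
/-- The strict order indicator: the sum of the basis elements `(x,y)` with `x < y`. -/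
noncomputable def soi (P : Type) [PartialOrder P] [Finite P] : VS P :=
  letI : Fintype (OPairs P) := Fintype.ofFinite _
  ∑ p : OPairs P, if p.val.1 < p.val.2 then Finsupp.single p 1 else 0

open scoped Classical in
/-- The sum of the basis elements `(x,y)` with `x < y` and `x, y ∈ S`. -/
noncomputable def soiOn {P : Type} [PartialOrder P] [Finite P] (S : Set P) : VS P :=
  letI : Fintype (OPairs P) := Fintype.ofFinite _
  ∑ p : OPairs P,
    if p.val.1 ∈ S ∧ p.val.2 ∈ S ∧ p.val.1 < p.val.2 then Finsupp.single p 1 else 0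

/-- The linear map `f̂` induced by a monotone map, sending the basis element `(x,y)`
to `(f x, f y)`. -/
noncomputable def fhat {P Q : Type} [PartialOrder P] [PartialOrder Q] {f : P → Q}
    (hf : Monotone f) : VS P →ₗ[ZMod 2] VS Q :=
  Finsupp.lmapDomain (ZMod 2) (ZMod 2) (fun p => ⟨(f p.val.1, f p.val.2), hf p.prop⟩)

/-- The barycentric subdivision of a poset: nonempty chains, ordered by inclusion. -/
def Sd (α : Type) [PartialOrder α] : Type :=
  {C : Set α // C.Nonempty ∧ IsChain (· ≤ ·) C}

instance {α : Type} [PartialOrder α] : PartialOrder (Sd α) :=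
  inferInstanceAs (PartialOrder {C : Set α // C.Nonempty ∧ IsChain (· ≤ ·) C})

instance {α : Type} [PartialOrder α] [Finite α] : Finite (Sd α) :=
  inferInstanceAs (Finite {C : Set α // C.Nonempty ∧ IsChain (· ≤ ·) C})

instance (n : ℕ) [NeZero n] : NeZero (2 * n) := ⟨by have := NeZero.ne n; omega⟩


/-! The nonempty chains of the crown of order `n` are its `4n` points `{x}` and its `4n` edges
`{a, a + 1}` (a chain holds at most one even and one odd point). Sending the point `x` to `2x` and
the edge `{a, a + 1}` to `2a + 1` identifies them with the crown of order `2n`; uniformly, the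
element `E` corresponds to the chain `{x | 2x ≤ E}`, so monotonicity is transitivity and order
reflection is a parity check. Under this identification translation by `2n` in the small crown
becomes translation by `4n` in the big one. -/

namespace Sd

variable {α β : Type} [PartialOrder α] [PartialOrder β]

def map (f : α →o β) : Sd α →o Sd β where
  toFun C := ⟨f '' C.val, C.prop.1.image f, f.monotone.isChain_image C.prop.2⟩
  monotone' _ _ h := Set.image_mono h

lemma map_map_of_involutive {f : α →o α} (hf : Function.Involutive f) (C : Sd α) :
    map f (map f C) = C :=
  Subtype.ext (by
    change f '' (f '' C.val) = C.val
    simp only [Set.image_image, hf _, Set.image_id'])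

end Sd

namespace Crown

variable {n : ℕ}

def double : Crown n →+ Crown (2 * n) :=
  ZMod.lift (4 * n) ⟨(AddMonoidHom.mulLeft 2).comp (Int.castAddHom _), by
    change (2 : Crown (2 * n)) * (((4 * n : ℕ) : ℤ) : Crown (2 * n)) = 0
    rw [Int.cast_natCast, ← ZMod.natCast_self (4 * (2 * n))]
    push_cast
    ring⟩

lemma double_natCast (k : ℕ) : double (k : Crown n) = ((2 * k : ℕ) : Crown (2 * n)) := by
  rw [← Int.cast_natCast, double, ZMod.lift_coe]
  simp only [AddMonoidHom.coe_comp, Function.comp_apply, Int.coe_castAddHom,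
    AddMonoidHom.coe_mulLeft, Int.cast_natCast, Nat.cast_mul, Nat.cast_ofNat]

lemma natCast_two_mul_add_self : ((2 * n : ℕ) : Crown n) + ((2 * n : ℕ) : Crown n) = 0 := by
  rw [← Nat.cast_add, ← two_mul, ← mul_assoc, ZMod.natCast_self]

lemma double_add_one (x : Crown n) : double (x + 1) = double x + 2 := by
  rw [map_add, ← Nat.cast_one, double_natCast]
  norm_num

variable [NeZero n]

lemma val_add_mod_two (x y : Crown n) : (x + y).val % 2 = (x.val + y.val) % 2 := by
  rw [ZMod.val_add, Nat.mod_mod_of_dvd _ ⟨2 * n, by ring⟩]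

lemma even_val_add_iff_of_even {c : Crown n} (x : Crown n) (hc : Even c.val) :
    Even (x + c).val ↔ Even x.val := by
  have := val_add_mod_two x c
  rw [Nat.even_iff] at hc
  rw [Nat.even_iff, Nat.even_iff]
  omega

lemma even_val_add_one_iff (x : Crown n) : Even (x + 1).val ↔ ¬Even x.val := by
  have := crown_parity x
  rw [Nat.even_iff, Nat.not_even_iff]
  omega

lemma even_val_sub_one_iff (x : Crown n) : Even (x - 1).val ↔ ¬Even x.val := by
  rw [← not_iff_not, not_not, ← even_val_add_one_iff, sub_add_cancel]

lemma le_iff_of_even {x y : Crown n} (hx : Even x.val) :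
    x ≤ y ↔ y = x ∨ y = x + 1 ∨ y = x - 1 := by
  change x = y ∨ _ ↔ _
  simp only [hx, true_and, eq_comm]

lemma le_iff_of_not_even {x y : Crown n} (hx : ¬Even x.val) : x ≤ y ↔ y = x := by
  change x = y ∨ _ ↔ _
  simp only [hx, false_and, or_false, eq_comm]

lemma even_and_not_even_of_lt {x y : Crown n} (h : x < y) : Even x.val ∧ ¬Even y.val := by
  obtain ⟨hxy, hne⟩ := lt_iff_le_and_ne.1 h
  by_cases hx : Even x.val
  · rcases (le_iff_of_even hx).1 hxy with rfl | rfl | rfl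
    · exact absurd rfl hne
    · exact ⟨hx, by rwa [even_val_add_one_iff, not_not]⟩
    · exact ⟨hx, by rwa [even_val_sub_one_iff, not_not]⟩
  · exact absurd ((le_iff_of_not_even hx).1 hxy).symm hne

lemma add_le_add_right_of_even {x y c : Crown n} (hc : Even c.val) (h : x ≤ y) :
    x + c ≤ y + c := by
  by_cases hx : Even x.val
  · rw [le_iff_of_even ((even_val_add_iff_of_even x hc).2 hx)]
    rcases (le_iff_of_even hx).1 h with rfl | rfl | rfl
    · exact Or.inl rfl
    · exact Or.inr (Or.inl (add_right_comm _ _ _))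
    · exact Or.inr (Or.inr (sub_add_eq_add_sub _ _ _))
  · rw [(le_iff_of_not_even hx).1 h]

lemma isChain_pair_add_one (a : Crown n) : IsChain (· ≤ ·) ({a, a + 1} : Set (Crown n)) := by
  by_cases ha : Even a.val
  · exact IsChain.pair ((le_iff_of_even ha).2 (Or.inr (Or.inl rfl)))
  · rw [Set.pair_comm]
    exact IsChain.pair ((le_iff_of_even ((even_val_add_one_iff a).2 ha)).2
      (Or.inr (Or.inr (add_sub_cancel_right a 1).symm)))

lemma eq_of_isChain_of_even_iff {C : Set (Crown n)} (hC : IsChain (· ≤ ·) C) {x y : Crown n}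
    (hx : x ∈ C) (hy : y ∈ C) (hxy : Even x.val ↔ Even y.val) : x = y := by
  by_contra hne
  rcases hC hx hy hne with h | h
  · have := even_and_not_even_of_lt (lt_of_le_of_ne h hne)
    exact this.2 (hxy.1 this.1)
  · have := even_and_not_even_of_lt (lt_of_le_of_ne h (Ne.symm hne))
    exact this.2 (hxy.2 this.1)

lemma eq_pair_of_lt {C : Set (Crown n)} (hC : IsChain (· ≤ ·) C) {u v : Crown n}
    (hu : u ∈ C) (hv : v ∈ C) (huv : u < v) : C = {u, v} := by
  have ⟨hu_even, hv_odd⟩ := even_and_not_even_of_lt huv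
  ext z
  refine ⟨fun hz => ?_, by rintro (rfl | rfl) <;> assumption⟩
  by_cases hz_even : Even z.val
  · exact Or.inl (eq_of_isChain_of_even_iff hC hz hu (iff_of_true hz_even hu_even))
  · exact Or.inr (eq_of_isChain_of_even_iff hC hz hv (iff_of_false hz_even hv_odd))

lemma exists_pair_add_one_eq_of_lt {u v : Crown n} (huv : u < v) :
    ∃ a, ({u, v} : Set (Crown n)) = {a, a + 1} := by
  rcases (le_iff_of_even (even_and_not_even_of_lt huv).1).1 huv.le with rfl | rfl | rfl
  · exact absurd huv (lt_irrefl _)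
  · exact ⟨u, rfl⟩
  · exact ⟨u - 1, by rw [Set.pair_comm, sub_add_cancel]⟩

lemma sd_eq_singleton_or_eq_pair (C : Sd (Crown n)) :
    (∃ x, C.val = {x}) ∨ ∃ a, C.val = {a, a + 1} := by
  obtain ⟨⟨x, hx⟩, hC⟩ := C.prop
  by_cases hsub : C.val ⊆ {x}
  · exact Or.inl ⟨x, hsub.antisymm (Set.singleton_subset_iff.2 hx)⟩
  obtain ⟨y, hy, hyx⟩ := Set.not_subset.1 hsub
  rcases hC hx hy (Ne.symm hyx) with h | h
  · rw [eq_pair_of_lt hC hx hy (lt_of_le_of_ne h (Ne.symm hyx))]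
    exact Or.inr (exists_pair_add_one_eq_of_lt (lt_of_le_of_ne h (Ne.symm hyx)))
  · rw [eq_pair_of_lt hC hy hx (lt_of_le_of_ne h hyx)]
    exact Or.inr (exists_pair_add_one_eq_of_lt (lt_of_le_of_ne h hyx))

lemma ofNat_two_ne_zero : (2 : Crown n) ≠ 0 := by
  have := NeZero.ne n
  intro h
  have h2 := congrArg ZMod.val h
  rw [ZMod.val_two_eq_two_mod, ZMod.val_zero, Nat.mod_eq_of_lt (by omega)] at h2
  exact two_ne_zero h2

lemma val_double (x : Crown n) : (double x).val = 2 * x.val := by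
  rw [← ZMod.natCast_zmod_val x, double_natCast, ZMod.natCast_zmod_val,
    ZMod.val_natCast_of_lt]
  have := ZMod.val_lt x
  omega

lemma double_injective : Function.Injective (double : Crown n → Crown (2 * n)) := by
  intro x y h
  apply ZMod.val_injective
  have := congrArg ZMod.val h
  rw [val_double, val_double] at this
  omega

lemma even_val_double (x : Crown n) : Even (double x).val := by
  rw [val_double]
  exact even_two_mul _

lemma not_even_val_double_add_one (x : Crown n) : ¬Even (double x + 1).val :=
  fun h => (even_val_add_one_iff _).1 h (even_val_double x)

lemma not_even_val_double_sub_one (x : Crown n) : ¬Even (double x - 1).val :=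
  fun h => (even_val_sub_one_iff _).1 h (even_val_double x)

lemma exists_eq_double_or_eq_double_add_one (E : Crown (2 * n)) :
    ∃ x, E = double x ∨ E = double x + 1 := by
  have hE : E = ((2 * (E.val / 2) + E.val % 2 : ℕ) : Crown (2 * n)) := by
    rw [Nat.div_add_mod, ZMod.natCast_zmod_val]
  refine ⟨(E.val / 2 : ℕ), ?_⟩
  rw [double_natCast]
  rcases Nat.mod_two_eq_zero_or_one E.val with h | h
  · exact Or.inl (by rwa [h, add_zero] at hE)
  · exact Or.inr (by rwa [h, Nat.cast_add, Nat.cast_one] at hE)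

def chainOf (E : Crown (2 * n)) : Set (Crown n) := {x | double x ≤ E}

lemma chainOf_double (x : Crown n) : chainOf (double x) = {x} := by
  ext y
  simp only [chainOf, Set.mem_ofPred_eq, Set.mem_singleton_iff, le_iff_of_even (even_val_double y)]
  refine ⟨fun h => ?_, fun h => Or.inl (h ▸ rfl)⟩
  rcases h with h | h | h
  · exact double_injective h.symm
  · exact absurd (h ▸ even_val_double x) (not_even_val_double_add_one y)
  · exact absurd (h ▸ even_val_double x) (not_even_val_double_sub_one y)

lemma chainOf_double_add_one (a : Crown n) : chainOf (double a + 1) = {a, a + 1} := by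
  ext y
  simp only [chainOf, Set.mem_ofPred_eq, Set.mem_insert_iff, Set.mem_singleton_iff,
    le_iff_of_even (even_val_double y)]
  rw [add_left_inj, eq_sub_iff_add_eq, add_assoc, one_add_one_eq_two, ← double_add_one,
    double_injective.eq_iff, double_injective.eq_iff]
  have h_odd : double a + 1 ≠ double y := fun h =>
    not_even_val_double_add_one a (h ▸ even_val_double y)
  simp only [h_odd, false_or, eq_comm]

lemma chainOf_nonempty_and_isChain (E : Crown (2 * n)) :
    (chainOf E).Nonempty ∧ IsChain (· ≤ ·) (chainOf E) := by
  obtain ⟨x, rfl | rfl⟩ := exists_eq_double_or_eq_double_add_one E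
  · rw [chainOf_double]
    exact ⟨Set.singleton_nonempty x, IsChain.singleton⟩
  · rw [chainOf_double_add_one]
    exact ⟨Set.insert_nonempty _ _, isChain_pair_add_one x⟩

def toSd (E : Crown (2 * n)) : Sd (Crown n) := ⟨chainOf E, chainOf_nonempty_and_isChain E⟩

lemma add_one_ne_self (x : Crown n) : x + 1 ≠ x := by
  intro h
  have := even_val_add_one_iff x
  rw [h] at this
  exact iff_not_self this

lemma eq_of_pair_add_one_subset {a b : Crown n}
    (h : ({a, a + 1} : Set (Crown n)) ⊆ {b, b + 1}) : a = b := by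
  rcases h (Set.mem_insert a _) with rfl | rfl
  · rfl
  rcases h (Set.mem_insert_of_mem _ rfl) with h2 | h2
  · rw [add_assoc, add_eq_left, one_add_one_eq_two] at h2
    exact absurd h2 ofNat_two_ne_zero
  · exact absurd (add_right_cancel h2) (add_one_ne_self b)

lemma toSd_le_toSd_iff {E F : Crown (2 * n)} : toSd E ≤ toSd F ↔ E ≤ F := by
  change chainOf E ⊆ chainOf F ↔ E ≤ F
  refine ⟨fun h => ?_, fun h _ hx => le_trans hx h⟩
  obtain ⟨a, rfl | rfl⟩ := exists_eq_double_or_eq_double_add_one E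
  · exact h (le_refl (double a))
  rw [chainOf_double_add_one] at h
  obtain ⟨b, rfl | rfl⟩ := exists_eq_double_or_eq_double_add_one F
  · rw [chainOf_double, Set.pair_subset_iff, Set.mem_singleton_iff, Set.mem_singleton_iff] at h
    exact absurd (h.2.trans h.1.symm) (add_one_ne_self a)
  · rw [chainOf_double_add_one] at h
    rw [eq_of_pair_add_one_subset h]

lemma toSd_surjective : Function.Surjective (toSd : Crown (2 * n) → Sd (Crown n)) := by
  intro C
  rcases sd_eq_singleton_or_eq_pair C with ⟨x, hx⟩ | ⟨a, ha⟩
  · exact ⟨double x, Subtype.ext ((chainOf_double x).trans hx.symm)⟩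
  · exact ⟨double a + 1, Subtype.ext ((chainOf_double_add_one a).trans ha.symm)⟩

noncomputable def sdOrderIso : Crown (2 * n) ≃o Sd (Crown n) :=
  OrderIso.ofSurjective (OrderEmbedding.ofMapLEIff toSd fun _ _ => toSd_le_toSd_iff)
    toSd_surjective

lemma val_natCast_two_mul : ((2 * n : ℕ) : Crown n).val = 2 * n :=
  ZMod.val_natCast_of_lt (by have := NeZero.ne n; omega)

lemma natCast_two_mul_ne_zero : ((2 * n : ℕ) : Crown n) ≠ 0 := by
  intro h
  have := val_natCast_two_mul (n := n)
  rw [h, ZMod.val_zero] at this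
  exact NeZero.ne n (by omega)

lemma add_natCast_two_mul_le_add_natCast_two_mul {x y : Crown n} (h : x ≤ y) :
    x + ((2 * n : ℕ) : Crown n) ≤ y + ((2 * n : ℕ) : Crown n) :=
  add_le_add_right_of_even (by rw [val_natCast_two_mul]; exact even_two_mul n) h

def antipode : Crown n →o Crown n :=
  ⟨(· + ((2 * n : ℕ) : Crown n)), fun _ _ => add_natCast_two_mul_le_add_natCast_two_mul⟩

lemma antipode_involutive : Function.Involutive (antipode (n := n)) := fun x => by
  change x + _ + _ = x
  rw [add_assoc, natCast_two_mul_add_self, add_zero]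

lemma chainOf_add_natCast_two_mul (E : Crown (2 * n)) :
    chainOf (E + ((2 * (2 * n) : ℕ) : Crown (2 * n))) = antipode '' chainOf E := by
  have h_double : double ((2 * n : ℕ) : Crown n) = ((2 * (2 * n) : ℕ) : Crown (2 * n)) :=
    double_natCast _
  ext x
  constructor
  · intro hx
    refine ⟨antipode x, ?_, antipode_involutive x⟩
    have := add_natCast_two_mul_le_add_natCast_two_mul hx
    rwa [add_assoc, natCast_two_mul_add_self, add_zero, ← h_double, ← map_add] at this
  · rintro ⟨y, hy, rfl⟩
    change double (y + _) ≤ _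
    rw [map_add, h_double]
    exact add_natCast_two_mul_le_add_natCast_two_mul hy

lemma sdOrderIso_add_natCast_two_mul (E : Crown (2 * n)) :
    sdOrderIso (E + ((2 * (2 * n) : ℕ) : Crown (2 * n))) = Sd.map antipode (sdOrderIso E) :=
  Subtype.ext (chainOf_add_natCast_two_mul E)

end Crown

/-- For `n ≥ 1`, the barycentric subdivision of the `Z₂`-crown of order
`n`, with the involution `C ↦ ν(C)`, is a `Z₂`-poset order-isomorphic to the `Z₂`-crown of
order `2n` via an isomorphism commuting with the involutions. -/
theorem subdivision_crown_iso_crown (n : ℕ) [NeZero n] :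
    ∃ ι : Sd (Crown n) → Sd (Crown n),
      (∀ C : Sd (Crown n),
        (ι C).val = (fun x : Crown n => x + ((2 * n : ℕ) : Crown n)) '' C.val) ∧
      Monotone ι ∧ (∀ C, ι (ι C) = C) ∧ (∀ C, ι C ≠ C) ∧
      ∃ e : Sd (Crown n) ≃o Crown (2 * n),
        ∀ C : Sd (Crown n), e (ι C) = e C + ((2 * (2 * n) : ℕ) : Crown (2 * n)) := by
  have h_equivariant (C : Sd (Crown n)) : Crown.sdOrderIso.symm (Sd.map Crown.antipode C) =
      Crown.sdOrderIso.symm C + ((2 * (2 * n) : ℕ) : Crown (2 * n)) := by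
    rw [OrderIso.symm_apply_eq, Crown.sdOrderIso_add_natCast_two_mul,
      OrderIso.apply_symm_apply]
  refine ⟨Sd.map Crown.antipode, fun C => rfl, (Sd.map Crown.antipode).monotone,
    Sd.map_map_of_involutive Crown.antipode_involutive, fun C h => ?_,
    Crown.sdOrderIso.symm, h_equivariant⟩
  have h_fixed := h_equivariant C
  rw [h, left_eq_add] at h_fixed
  exact Crown.natCast_two_mul_ne_zero h_fixed
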